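/- Let F(x, y, z) = Σ_{j=1}^m ‖S_j(x) ⊙ y - z_j‖² on ℂⁿ × ℂⁿ × (ℂⁿ)^m with permutation operators S_j. Then for fixed x and z, the map y ↦ ∇_y F(x, y, z) is Lipschitz with constant L_y(x, z) = 2‖Σ_{j=1}^m S_j(x̄ ⊙ x)‖_∞, and moreover ∇_y F(x, y, z) = 2 Σ_{j=1}^m [S_j(x̄ ⊙ x) ⊙ y - S_j(x̄) ⊙ z_j]. -/

import Mathlib

/-!
Each summand `‖S_j(x) ⊙ y - z_j‖²` is a least-squares term `‖A y - z_j‖²` for the ℝ-linear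
Hadamard multiplier `A = c_j ⊙ ·`, whose gradient is `2 A* (A y - z_j)`, and the real adjoint
of `c ⊙ ·` is `c̄ ⊙ ·`. Summing over `j` gives the gradient formula; it is affine in `y` with
linear part `2 (Σ_j S_j(x̄ ⊙ x)) ⊙ ·`, and a Hadamard multiplier acts on `ℓ²` with operator
norm at most the sup norm of its symbol.
-/

open RealInnerProductSpace ComplexConjugate

section Gradient

variable {E F : Type*} [NormedAddCommGroup E] [InnerProductSpace ℝ E] [CompleteSpace E]
  [NormedAddCommGroup F] [InnerProductSpace ℝ F] [CompleteSpace F]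

theorem HasGradientAt.fun_sum {ι : Type*} {s : Finset ι} {f : ι → E → ℝ} {f' : ι → E} {x : E}
    (h : ∀ i ∈ s, HasGradientAt (f i) (f' i) x) :
    HasGradientAt (fun y => ∑ i ∈ s, f i y) (∑ i ∈ s, f' i) x := by
  rw [hasGradientAt_iff_hasFDerivAt, map_sum]
  exact HasFDerivAt.fun_sum h

theorem hasGradientAt_norm_sub_sq (A : E →L[ℝ] F) (z : F) (y : E) :
    HasGradientAt (fun y => ‖A y - z‖ ^ 2) (2 • A.adjoint (A y - z)) y := by
  rw [hasGradientAt_iff_hasFDerivAt]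
  refine (A.hasFDerivAt.sub_const z).norm_sq.congr_fderiv ?_
  ext h
  simp [ContinuousLinearMap.adjoint_inner_left]

end Gradient

theorem pi_norm_le_ciSup_norm {ι E : Type*} [Fintype ι] [SeminormedAddCommGroup E] (c : ι → E) :
    ‖c‖ ≤ ⨆ i, ‖c i‖ :=
  (pi_norm_le_iff_of_nonneg (Real.iSup_nonneg fun _ => norm_nonneg _)).2
    fun i => le_ciSup (f := fun i => ‖c i‖) (Set.finite_range _).bddAbove i

section Hadamard

variable {ι : Type*} [Fintype ι]

noncomputable def hadamardCLM (c : ι → ℂ) :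
    EuclideanSpace ℂ ι →L[ℝ] EuclideanSpace ℂ ι :=
  LinearMap.toContinuousLinearMap
  { toFun := fun y => WithLp.toLp 2 fun i => c i * y i
    map_add' := fun a b => by ext i; simp [mul_add]
    map_smul' := fun r a => by ext i; simp [Complex.real_smul, mul_left_comm] }

@[simp] theorem hadamardCLM_apply (c : ι → ℂ) (y : EuclideanSpace ℂ ι) (i : ι) :
    hadamardCLM c y i = c i * y i := rfl

theorem adjoint_hadamardCLM (c : ι → ℂ) :
    (hadamardCLM c).adjoint = hadamardCLM (star c) := by
  refine ((ContinuousLinearMap.eq_adjoint_iff _ _).2 fun u v => ?_).symm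
  simp only [PiLp.inner_apply, Complex.inner, hadamardCLM_apply, Pi.star_apply, map_mul,
    Complex.star_def, Complex.conj_conj, ← Complex.re_sum]
  exact congrArg Complex.re (Finset.sum_congr rfl fun i _ => by ring)

theorem norm_hadamardCLM_apply_le (c : ι → ℂ) (y : EuclideanSpace ℂ ι) :
    ‖hadamardCLM c y‖ ≤ ‖c‖ * ‖y‖ := by
  refine le_of_sq_le_sq ?_ (by positivity)
  rw [mul_pow, EuclideanSpace.norm_sq_eq, EuclideanSpace.norm_sq_eq, Finset.mul_sum]
  refine Finset.sum_le_sum fun i _ => ?_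
  simp only [hadamardCLM_apply, norm_mul, mul_pow]
  gcongr
  exact norm_le_pi_norm c i

theorem hasGradientAt_sum_norm_hadamardCLM_sub_sq {κ : Type*} [Fintype κ] (c : κ → ι → ℂ)
    (z : κ → EuclideanSpace ℂ ι) (y : EuclideanSpace ℂ ι) :
    HasGradientAt (fun y => ∑ j, ‖hadamardCLM (c j) y - z j‖ ^ 2)
      (WithLp.toLp 2 fun i =>
        2 * ((∑ j, conj (c j i) * c j i) * y i - ∑ j, conj (c j i) * z j i)) y := by
  convert HasGradientAt.fun_sum fun j _ => hasGradientAt_norm_sub_sq (hadamardCLM (c j)) (z j) y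
    using 1
  ext i
  simp only [adjoint_hadamardCLM, WithLp.ofLp_sum, Finset.sum_apply,
    PiLp.smul_apply, PiLp.sub_apply, hadamardCLM_apply, Pi.star_apply, Complex.star_def,
    Finset.sum_mul, Finset.mul_sum, ← Finset.sum_sub_distrib]
  exact Finset.sum_congr rfl fun j _ => by simp only [nsmul_eq_mul]; push_cast; ring

end Hadamard

/-- For `F(x, y, z) = Σ_j ‖S_j(x) ⊙ y - z_j‖²` with `x`, `z` fixed, the map
`y ↦ ∇_yF(x, y, z)` is Lipschitz with constant `2‖Σ_j S_j(x̄ ⊙ x)‖_∞`, and moreover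
`∇_yF(x, y, z) = 2 Σ_j [S_j(x̄ ⊙ x) ⊙ y - S_j(x̄) ⊙ z_j]`. -/
theorem stmt_5 {n m : ℕ} (S : Fin m → Equiv.Perm (Fin n))
    (x : EuclideanSpace ℂ (Fin n)) (z : Fin m → EuclideanSpace ℂ (Fin n))
    (F : EuclideanSpace ℂ (Fin n) → ℝ)
    (hF : F = fun y => ∑ j,
      ‖(WithLp.equiv 2 (Fin n → ℂ)).symm (fun i => x (S j i) * y i) - z j‖^2)
    (G : EuclideanSpace ℂ (Fin n) → EuclideanSpace ℂ (Fin n))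
    (hG : ∀ y, HasGradientAt F (G y) y) :
    (∀ y, G y = (WithLp.equiv 2 (Fin n → ℂ)).symm (fun i =>
        2 * ((∑ j, (starRingEnd ℂ) (x (S j i)) * x (S j i)) * y i
          - ∑ j, (starRingEnd ℂ) (x (S j i)) * z j i))) ∧
      ∀ a b, ‖G a - G b‖ ≤
        (2 * ⨆ i, ‖∑ j, (starRingEnd ℂ) (x (S j i)) * x (S j i)‖) * ‖a - b‖ := by
  subst hF
  have hG_eq : ∀ y, G y = _ := fun y =>
    (hG y).unique (hasGradientAt_sum_norm_hadamardCLM_sub_sq (fun j i => x (S j i)) z y)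
  refine ⟨hG_eq, fun a b => ?_⟩
  set C : Fin n → ℂ := fun i => ∑ j, conj (x (S j i)) * x (S j i)
  have hG_sub : G a - G b = (2 : ℝ) • hadamardCLM C (a - b) := by
    ext i
    simp only [hG_eq, PiLp.sub_apply, PiLp.smul_apply, hadamardCLM_apply, C, Complex.real_smul]
    push_cast
    ring
  calc ‖G a - G b‖ = 2 * ‖hadamardCLM C (a - b)‖ := by rw [hG_sub, norm_smul]; norm_num
    _ ≤ 2 * (‖C‖ * ‖a - b‖) := by gcongr; exact norm_hadamardCLM_apply_le C (a - b)
    _ ≤ _ := by rw [← mul_assoc]; gcongr; exact pi_norm_le_ciSup_norm C
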